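/- arXiv:1802.08623 — 2 statements merged into one kernel-verified Lean document; each statement's English description precedes it below -/
import Mathlib

section
/- Let 1/2 < H < 1. There exists a constant M_H > 0 such that for every k ∈ ℤ²₀, ∑_{h ∈ ℤ²₀, h ≠ k} 1/(|h|^{4H} |k-h|^{4H}) ≤ M_H / |k|^{4H}. -/
/-!
Since `|h| + |k - h| ≥ |k|`, one of `|h|`, `|k - h|` is at least `|k| / 2`, so each summand is
at most `(2 / |k|) ^ (4H) * (|h| ^ (-4H) + |k - h| ^ (-4H))`. Summing, both pieces are bounded by
the lattice sum `∑ |h| ^ (-4H)`, which converges because `4H > 2`.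
-/

/-- Euclidean norm of an element of `ℤ²`. -/
noncomputable def znorm (k : ℤ × ℤ) : ℝ :=
  Real.sqrt ((k.1 : ℝ) ^ 2 + (k.2 : ℝ) ^ 2)

lemma one_div_rpow_mul_rpow_le {x y b a : ℝ} (hx : 0 < x) (hy : 0 < y) (hb : 0 < b) (ha : 0 ≤ a)
    (hxy : b ≤ x + y) : 1 / (x ^ a * y ^ a) ≤ (2 / b) ^ a * (1 / x ^ a + 1 / y ^ a) := by
  wlog hbx : b / 2 ≤ x generalizing x y
  · rw [mul_comm, add_comm]
    exact this hy hx (by linarith) (by linarith)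
  have hx_inv : 1 / x ^ a ≤ (2 / b) ^ a := by
    have h : 1 / x ≤ 2 / b := by rw [div_le_div_iff₀ hx hb]; linarith
    calc 1 / x ^ a = (1 / x) ^ a := by rw [Real.div_rpow zero_le_one hx.le, Real.one_rpow]
      _ ≤ (2 / b) ^ a := by gcongr
  have hx_inv_nonneg : 0 ≤ 1 / x ^ a := by positivity
  calc 1 / (x ^ a * y ^ a) = 1 / x ^ a * (1 / y ^ a) := by rw [one_div_mul_one_div]
    _ ≤ (2 / b) ^ a * (1 / y ^ a) := by gcongr
    _ ≤ (2 / b) ^ a * (1 / x ^ a + 1 / y ^ a) := by gcongr; linarith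

section SubtypeSum

variable {G : Type*} [AddCommGroup G] {f : G → ℝ}

lemma Summable.subtype_add_comp_sub (hf : Summable f) (p : G → Prop) (k : G) :
    Summable fun h : {h // p h} => f h + f (k - h) :=
  (hf.subtype p).add (((Equiv.subLeft k).summable_iff.mpr hf).subtype p)

lemma Summable.tsum_subtype_add_comp_sub_le (hf : Summable f) (hf0 : ∀ h, 0 ≤ f h)
    (p : G → Prop) (k : G) : ∑' h : {h // p h}, (f h + f (k - h)) ≤ 2 * ∑' h, f h := by
  have hfk : Summable fun h => f (k - h) := (Equiv.subLeft k).summable_iff.mpr hf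
  have hfk_tsum : ∑' h, f (k - h) = ∑' h, f h := (Equiv.subLeft k).tsum_eq f
  calc ∑' h : {h // p h}, (f h + f (k - h))
      = ∑' h : {h // p h}, f h + ∑' h : {h // p h}, f (k - h) :=
        (hf.subtype p).tsum_add (hfk.subtype p)
    _ ≤ ∑' h, f h + ∑' h, f (k - h) :=
        add_le_add (hf.tsum_subtype_le f {h | p h} hf0)
          (hfk.tsum_subtype_le _ {h | p h} fun h => hf0 _)
    _ = 2 * ∑' h, f h := by rw [hfk_tsum]; ring

end SubtypeSum

lemma norm_finTwoArrowEquiv_symm {α : Type*} [SeminormedAddGroup α] (k : α × α) :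
    ‖(finTwoArrowEquiv α).symm k‖ = ‖k‖ := by
  simp only [finTwoArrowEquiv_symm_apply, Prod.norm_def]
  refine le_antisymm ((pi_norm_le_iff_of_nonneg (by positivity)).2 fun i => ?_) (max_le ?_ ?_)
  · fin_cases i <;> simp
  · simpa using norm_le_pi_norm ![k.1, k.2] 0
  · simpa using norm_le_pi_norm ![k.1, k.2] 1

lemma summable_norm_rpow_neg_int_prod {a : ℝ} (ha : 2 < a) :
    Summable fun k : ℤ × ℤ => ‖k‖ ^ (-a) := by
  simpa only [Function.comp_def, norm_finTwoArrowEquiv_symm] using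
    (finTwoArrowEquiv ℤ).symm.summable_iff.mpr (EisensteinSeries.summable_one_div_norm_rpow ha)

def intPairToComplex : ℤ × ℤ →+ ℂ :=
  AddMonoidHom.mk' (fun k => ⟨k.1, k.2⟩) fun _ _ => Complex.ext (by simp) (by simp)

lemma intPairToComplex_injective : Function.Injective intPairToComplex := by
  intro k h hkh
  simp only [intPairToComplex, AddMonoidHom.mk'_apply, Complex.mk.injEq, Int.cast_inj] at hkh
  exact Prod.ext hkh.1 hkh.2

lemma znorm_eq_norm_intPairToComplex (k : ℤ × ℤ) : znorm k = ‖intPairToComplex k‖ := by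
  rw [← Complex.re_add_im (intPairToComplex k), Complex.norm_add_mul_I]
  rfl

lemma znorm_nonneg (k : ℤ × ℤ) : 0 ≤ znorm k := Real.sqrt_nonneg _

lemma znorm_pos {k : ℤ × ℤ} (hk : k ≠ 0) : 0 < znorm k := by
  rw [znorm_eq_norm_intPairToComplex, norm_pos_iff]
  exact (map_ne_zero_iff _ intPairToComplex_injective).mpr hk

lemma znorm_le_znorm_add_znorm_sub (k h : ℤ × ℤ) : znorm k ≤ znorm h + znorm (k - h) := by
  simp only [znorm_eq_norm_intPairToComplex, map_sub]
  exact norm_le_norm_add_norm_sub' _ _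

lemma norm_le_znorm (k : ℤ × ℤ) : ‖k‖ ≤ znorm k := by
  have h1 : |(k.1 : ℝ)| ≤ znorm k := Real.abs_le_sqrt (by nlinarith [sq_nonneg (k.2 : ℝ)])
  have h2 : |(k.2 : ℝ)| ≤ znorm k := Real.abs_le_sqrt (by nlinarith [sq_nonneg (k.1 : ℝ)])
  simpa [Prod.norm_def, Int.norm_eq_abs] using And.intro h1 h2

lemma summable_one_div_znorm_rpow {a : ℝ} (ha : 2 < a) :
    Summable fun k : ℤ × ℤ => 1 / znorm k ^ a := by
  refine (summable_norm_rpow_neg_int_prod ha).of_nonneg_of_le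
    (fun k => by have := znorm_nonneg k; positivity) fun k => ?_
  rcases eq_or_ne k 0 with rfl | hk
  · simpa [znorm, Real.zero_rpow (by linarith : a ≠ 0)] using Real.rpow_nonneg le_rfl (-a)
  · rw [one_div, ← Real.rpow_neg (znorm_nonneg k)]
    exact Real.rpow_le_rpow_of_nonpos (norm_pos_iff.mpr hk) (norm_le_znorm k) (by linarith)

theorem statement_4_general (H : ℝ) (hH1 : 1 / 2 < H) :
    ∃ M : ℝ, 0 < M ∧ ∀ k : ℤ × ℤ, k ≠ 0 →
      (∑' h : {h : ℤ × ℤ // h ≠ 0 ∧ h ≠ k},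
          1 / (znorm h.1 ^ (4 * H) * znorm (k - h.1) ^ (4 * H)))
        ≤ M / znorm k ^ (4 * H) := by
  set a := 4 * H
  set g : ℤ × ℤ → ℝ := fun h => 1 / znorm h ^ a
  have hg : Summable g := summable_one_div_znorm_rpow (by linarith)
  have hg0 : ∀ h, 0 ≤ g h := fun h => by have := znorm_nonneg h; positivity
  have hS : 0 < ∑' h, g h := hg.tsum_pos hg0 (1, 0) (by simp [g, znorm])
  refine ⟨2 * 2 ^ a * ∑' h, g h, by positivity, fun k hk => ?_⟩
  have hb := znorm_pos hk
  have hterm : ∀ h : {h : ℤ × ℤ // h ≠ 0 ∧ h ≠ k},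
      1 / (znorm h.1 ^ a * znorm (k - h.1) ^ a) ≤ (2 / znorm k) ^ a * (g h + g (k - h)) :=
    fun h => one_div_rpow_mul_rpow_le (znorm_pos h.2.1) (znorm_pos (sub_ne_zero.mpr h.2.2.symm))
      hb (by linarith) (znorm_le_znorm_add_znorm_sub k h)
  have hmaj :=
    (hg.subtype_add_comp_sub (fun h => h ≠ 0 ∧ h ≠ k) k).mul_left ((2 / znorm k) ^ a)
  have hterm_nonneg : ∀ h : {h : ℤ × ℤ // h ≠ 0 ∧ h ≠ k},
      0 ≤ 1 / (znorm h.1 ^ a * znorm (k - h.1) ^ a) :=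
    fun h => by have := znorm_nonneg h.1; have := znorm_nonneg (k - h.1); positivity
  calc ∑' h : {h : ℤ × ℤ // h ≠ 0 ∧ h ≠ k}, 1 / (znorm h.1 ^ a * znorm (k - h.1) ^ a)
      ≤ ∑' h : {h : ℤ × ℤ // h ≠ 0 ∧ h ≠ k}, (2 / znorm k) ^ a * (g h + g (k - h)) :=
        (hmaj.of_nonneg_of_le hterm_nonneg hterm).tsum_le_tsum hterm hmaj
    _ = (2 / znorm k) ^ a * ∑' h : {h : ℤ × ℤ // h ≠ 0 ∧ h ≠ k}, (g h + g (k - h)) :=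
        tsum_mul_left
    _ ≤ (2 / znorm k) ^ a * (2 * ∑' h, g h) := by
        gcongr
        exact hg.tsum_subtype_add_comp_sub_le hg0 _ k
    _ = 2 * 2 ^ a * (∑' h, g h) / znorm k ^ a := by
        rw [Real.div_rpow zero_le_two hb.le]; ring

theorem statement_4 (H : ℝ) (hH1 : 1 / 2 < H) (hH2 : H < 1) :
    ∃ M : ℝ, 0 < M ∧ ∀ k : ℤ × ℤ, k ≠ 0 →
      (∑' h : {h : ℤ × ℤ // h ≠ 0 ∧ h ≠ k},
          1 / (znorm h.1 ^ (4 * H) * znorm (k - h.1) ^ (4 * H)))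
        ≤ M / znorm k ^ (4 * H) :=
  statement_4_general H hH1
end

section
/- Let 1/2 < H < 1 and let ρ be a real number with -1 < ρ < 2(H-1). For a real number a ≥ 2 let D̃_a = ℝ² \ (B₁((0,0)) ∪ B₁((a,0))), where B₁(c) is the open unit ball centered at c, and let I₂(a) = ∫∫_{D̃_a} dx dy / ((x² + y²)^{2H-ρ-1} ((x-a)² + y²)^{2H}). Then there exists a constant C > 0 (depending only on H and ρ) such that I₂(a) ≤ C a^{-(4H-2ρ-2)} for all a ≥ 2. -/
/-!
Write `s = 2H - ρ - 1` and `t = 2H`, so that `1 < s ≤ t` and `4H - 2ρ - 2 = 2s`. A point of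
`D̃_a` lies at distance at least `a/2` from one of the two centres. The factor belonging to that
centre is then at least `(a/2)^{2s}` (for the centre `(a,0)` because its distance is `≥ 1` and
`t ≥ s`), and what remains is `|p|^{-2s}` or `|p - (a,0)|^{-2t}` on the complement of a unit disc,
whose integral is finite (both exponents exceed the dimension) and, by translation invariance,
independent of `a`.
-/

open MeasureTheory

/-- The region `ℝ² \ (B₁((0,0)) ∪ B₁((a,0)))`: the plane with the two open unit balls
centered at the origin and at `(a,0)` removed. -/
def Dtilde (a : ℝ) : Set (ℝ × ℝ) :=
  {p : ℝ × ℝ | 1 ≤ p.1 ^ 2 + p.2 ^ 2 ∧ 1 ≤ (p.1 - a) ^ 2 + p.2 ^ 2}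

lemma one_add_norm_sq_le_four_mul {p : ℝ × ℝ} (hp : 1 ≤ p.1 ^ 2 + p.2 ^ 2) :
    (1 + ‖p‖) ^ 2 ≤ 4 * (p.1 ^ 2 + p.2 ^ 2) := by
  have hnorm : ‖p‖ ^ 2 ≤ p.1 ^ 2 + p.2 ^ 2 := by
    rw [Prod.norm_def, Real.norm_eq_abs, Real.norm_eq_abs]
    rcases le_total |p.1| |p.2| with h | h
    · rw [max_eq_right h, sq_abs]; nlinarith [sq_nonneg p.1]
    · rw [max_eq_left h, sq_abs]; nlinarith [sq_nonneg p.2]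
  nlinarith [norm_nonneg p, sq_nonneg (1 - ‖p‖)]

lemma integrableOn_inv_rpow_sq_add_sq {s : ℝ} (hs : 1 < s) :
    IntegrableOn (fun p : ℝ × ℝ => ((p.1 ^ 2 + p.2 ^ 2) ^ s)⁻¹)
      {p | 1 ≤ p.1 ^ 2 + p.2 ^ 2} := by
  have hdim : (Module.finrank ℝ (ℝ × ℝ) : ℝ) < 2 * s := by
    simp only [Module.finrank_prod, Module.finrank_self]; push_cast; linarith
  refine ((integrable_one_add_norm hdim).const_mul ((4 : ℝ) ^ s)).restrict.mono'
    (Measurable.aestronglyMeasurable (by fun_prop)) ?_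
  filter_upwards [ae_restrict_mem (measurableSet_le (by fun_prop) (by fun_prop))] with p hp
  have hp : 1 ≤ p.1 ^ 2 + p.2 ^ 2 := hp
  rw [Real.norm_of_nonneg (by positivity)]
  calc ((p.1 ^ 2 + p.2 ^ 2) ^ s)⁻¹ = 4 ^ s * ((4 * (p.1 ^ 2 + p.2 ^ 2)) ^ s)⁻¹ := by
        rw [Real.mul_rpow (by norm_num) (by positivity), mul_inv, ← mul_assoc,
          mul_inv_cancel₀ (by positivity), one_mul]
    _ ≤ 4 ^ s * (((1 + ‖p‖) ^ 2) ^ s)⁻¹ := by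
        gcongr; exact one_add_norm_sq_le_four_mul hp
    _ = 4 ^ s * (1 + ‖p‖) ^ (-(2 * s)) := by
        rw [Real.rpow_neg (by positivity), ← Real.rpow_natCast, ← Real.rpow_mul (by positivity)]
        norm_num

lemma preimage_sub_mk_zero_setOf_one_le_sq_add_sq (a : ℝ) :
    (fun p : ℝ × ℝ => p - (a, 0)) ⁻¹' {p | 1 ≤ p.1 ^ 2 + p.2 ^ 2} =
      {p | 1 ≤ (p.1 - a) ^ 2 + p.2 ^ 2} := by
  ext p; simp

noncomputable def diskExteriorIntegral (s : ℝ) : ℝ :=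
  ∫ p in {p : ℝ × ℝ | 1 ≤ p.1 ^ 2 + p.2 ^ 2}, ((p.1 ^ 2 + p.2 ^ 2) ^ s)⁻¹

lemma diskExteriorIntegral_nonneg (s : ℝ) : 0 ≤ diskExteriorIntegral s :=
  setIntegral_nonneg_of_ae (ae_of_all _ fun _ => by positivity)

section Translate

variable (a : ℝ) {s : ℝ}

lemma measurePreserving_sub_mk_zero :
    MeasurePreserving (fun p : ℝ × ℝ => p - (a, 0)) :=
  measurePreserving_sub_right volume _

lemma measurableEmbedding_sub_mk_zero :
    MeasurableEmbedding (fun p : ℝ × ℝ => p - (a, 0)) :=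
  (MeasurableEquiv.subRight ((a, 0) : ℝ × ℝ)).measurableEmbedding

lemma integrableOn_inv_rpow_sub_sq_add_sq (hs : 1 < s) :
    IntegrableOn (fun p : ℝ × ℝ => (((p.1 - a) ^ 2 + p.2 ^ 2) ^ s)⁻¹)
      {p | 1 ≤ (p.1 - a) ^ 2 + p.2 ^ 2} := by
  have := ((measurePreserving_sub_mk_zero a).integrableOn_comp_preimage
    (measurableEmbedding_sub_mk_zero a)).mpr (integrableOn_inv_rpow_sq_add_sq hs)
  simpa [Function.comp_def, preimage_sub_mk_zero_setOf_one_le_sq_add_sq] using this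

lemma setIntegral_inv_rpow_sub_sq_add_sq :
    ∫ p in {p : ℝ × ℝ | 1 ≤ (p.1 - a) ^ 2 + p.2 ^ 2}, (((p.1 - a) ^ 2 + p.2 ^ 2) ^ s)⁻¹ =
      diskExteriorIntegral s := by
  have := (measurePreserving_sub_mk_zero a).setIntegral_preimage_emb
    (measurableEmbedding_sub_mk_zero a) (fun p : ℝ × ℝ => ((p.1 ^ 2 + p.2 ^ 2) ^ s)⁻¹)
    {p | 1 ≤ p.1 ^ 2 + p.2 ^ 2}
  simpa [diskExteriorIntegral, preimage_sub_mk_zero_setOf_one_le_sq_add_sq] using this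

end Translate

lemma one_div_rpow_mul_rpow_le_s18 {X Y c s t : ℝ} (hX : 0 < X) (hY : 1 ≤ Y) (hc : 0 < c)
    (hs : 0 ≤ s) (hst : s ≤ t) (h : c ≤ X ∨ c ≤ Y) :
    1 / (X ^ s * Y ^ t) ≤ (c ^ s)⁻¹ * ((X ^ s)⁻¹ + (Y ^ t)⁻¹) := by
  have hXs : 0 < X ^ s := by positivity
  have hYt : 0 < Y ^ t := by positivity
  rw [one_div, mul_inv, mul_add]
  rcases h with hcX | hcY
  · have : (X ^ s)⁻¹ ≤ (c ^ s)⁻¹ := by gcongr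
    nlinarith [inv_pos.2 hXs, inv_pos.2 hYt, inv_pos.2 (Real.rpow_pos_of_pos hc s)]
  · have : (Y ^ t)⁻¹ ≤ (c ^ s)⁻¹ := by
      gcongr
      calc c ^ s ≤ Y ^ s := by gcongr
        _ ≤ Y ^ t := Real.rpow_le_rpow_of_exponent_le hY hst
    nlinarith [inv_pos.2 hXs, inv_pos.2 hYt, inv_pos.2 (Real.rpow_pos_of_pos hc s)]

lemma half_sq_le_or {a : ℝ} (ha : 0 ≤ a) (p : ℝ × ℝ) :
    (a / 2) ^ 2 ≤ p.1 ^ 2 + p.2 ^ 2 ∨ (a / 2) ^ 2 ≤ (p.1 - a) ^ 2 + p.2 ^ 2 := by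
  rcases le_total (a / 2) p.1 with h | h
  · left; nlinarith [sq_nonneg p.2]
  · right; nlinarith [sq_nonneg p.2]

lemma measurableSet_Dtilde (a : ℝ) : MeasurableSet (Dtilde a) :=
  show MeasurableSet ({p : ℝ × ℝ | 1 ≤ p.1 ^ 2 + p.2 ^ 2} ∩ {p | 1 ≤ (p.1 - a) ^ 2 + p.2 ^ 2}) from
    (measurableSet_le (by fun_prop) (by fun_prop)).inter
      (measurableSet_le (by fun_prop) (by fun_prop))

lemma inv_rpow_half_sq {a : ℝ} (ha : 0 ≤ a) (s : ℝ) :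
    (((a / 2) ^ 2) ^ s)⁻¹ = 4 ^ s / a ^ (2 * s) := by
  rw [div_pow, Real.div_rpow (by positivity) (by norm_num), inv_div,
    ← Real.rpow_natCast a 2, ← Real.rpow_mul ha]
  norm_num

theorem setIntegral_Dtilde_le {s t a : ℝ} (hs : 1 < s) (hst : s ≤ t) (ha : 0 < a) :
    ∫ p in Dtilde a, 1 / ((p.1 ^ 2 + p.2 ^ 2) ^ s * ((p.1 - a) ^ 2 + p.2 ^ 2) ^ t)
      ≤ 4 ^ s * (diskExteriorIntegral s + diskExteriorIntegral t) / a ^ (2 * s) := by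
  have hsubX : Dtilde a ⊆ {p | 1 ≤ p.1 ^ 2 + p.2 ^ 2} := fun _ hp => hp.1
  have hsubY : Dtilde a ⊆ {p | 1 ≤ (p.1 - a) ^ 2 + p.2 ^ 2} := fun _ hp => hp.2
  have hX := (integrableOn_inv_rpow_sq_add_sq hs).mono_set hsubX
  have hY := (integrableOn_inv_rpow_sub_sq_add_sq a (hs.trans_le hst)).mono_set hsubY
  have hpointwise : ∀ p ∈ Dtilde a,
      1 / ((p.1 ^ 2 + p.2 ^ 2) ^ s * ((p.1 - a) ^ 2 + p.2 ^ 2) ^ t) ≤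
        (((a / 2) ^ 2) ^ s)⁻¹ * (((p.1 ^ 2 + p.2 ^ 2) ^ s)⁻¹ + (((p.1 - a) ^ 2 + p.2 ^ 2) ^ t)⁻¹) :=
    fun p hp => one_div_rpow_mul_rpow_le_s18 (by linarith [hp.1]) hp.2 (by positivity) (by linarith)
      hst (half_sq_le_or ha.le p)
  calc ∫ p in Dtilde a, 1 / ((p.1 ^ 2 + p.2 ^ 2) ^ s * ((p.1 - a) ^ 2 + p.2 ^ 2) ^ t)
      ≤ ∫ p in Dtilde a, (((a / 2) ^ 2) ^ s)⁻¹ *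
          (((p.1 ^ 2 + p.2 ^ 2) ^ s)⁻¹ + (((p.1 - a) ^ 2 + p.2 ^ 2) ^ t)⁻¹) :=
        integral_mono_of_nonneg (ae_of_all _ fun p => by positivity) ((hX.add hY).const_mul _)
          (ae_restrict_of_forall_mem (measurableSet_Dtilde a) hpointwise)
    _ = (((a / 2) ^ 2) ^ s)⁻¹ * ((∫ p in Dtilde a, ((p.1 ^ 2 + p.2 ^ 2) ^ s)⁻¹) +
          ∫ p in Dtilde a, (((p.1 - a) ^ 2 + p.2 ^ 2) ^ t)⁻¹) := by
        rw [integral_const_mul, integral_add hX hY]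
    _ ≤ (((a / 2) ^ 2) ^ s)⁻¹ * (diskExteriorIntegral s + diskExteriorIntegral t) := by
        rw [← setIntegral_inv_rpow_sub_sq_add_sq a (s := t)]
        refine mul_le_mul_of_nonneg_left (add_le_add ?_ ?_) (by positivity)
        · exact setIntegral_mono_set (integrableOn_inv_rpow_sq_add_sq hs)
            (ae_of_all _ fun p => by positivity) hsubX.eventuallyLE
        · exact setIntegral_mono_set (integrableOn_inv_rpow_sub_sq_add_sq a (hs.trans_le hst))
            (ae_of_all _ fun p => by positivity) hsubY.eventuallyLE
    _ = 4 ^ s * (diskExteriorIntegral s + diskExteriorIntegral t) / a ^ (2 * s) := by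
        rw [inv_rpow_half_sq ha.le]; ring

theorem statement_18_general (H ρ : ℝ)
    (hρ1 : -1 < ρ) (hρ2 : ρ < 2 * (H - 1)) :
    ∃ C : ℝ, 0 < C ∧ ∀ a : ℝ, 2 ≤ a →
      (∫ p in Dtilde a,
          1 / ((p.1 ^ 2 + p.2 ^ 2) ^ (2 * H - ρ - 1) * ((p.1 - a) ^ 2 + p.2 ^ 2) ^ (2 * H)))
        ≤ C / a ^ (4 * H - 2 * ρ - 2) := by
  have hs : 1 < 2 * H - ρ - 1 := by linarith
  have hst : 2 * H - ρ - 1 ≤ 2 * H := by linarith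
  have hK := add_nonneg (diskExteriorIntegral_nonneg (2 * H - ρ - 1))
    (diskExteriorIntegral_nonneg (2 * H))
  refine ⟨4 ^ (2 * H - ρ - 1) *
      (diskExteriorIntegral (2 * H - ρ - 1) + diskExteriorIntegral (2 * H)) + 1,
    by positivity, fun a ha => ?_⟩
  rw [show 4 * H - 2 * ρ - 2 = 2 * (2 * H - ρ - 1) by ring]
  exact (setIntegral_Dtilde_le hs hst (by linarith)).trans (by gcongr; linarith)

theorem statement_18 (H ρ : ℝ) (hH1 : 1 / 2 < H) (hH2 : H < 1)
    (hρ1 : -1 < ρ) (hρ2 : ρ < 2 * (H - 1)) :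
    ∃ C : ℝ, 0 < C ∧ ∀ a : ℝ, 2 ≤ a →
      (∫ p in Dtilde a,
          1 / ((p.1 ^ 2 + p.2 ^ 2) ^ (2 * H - ρ - 1) * ((p.1 - a) ^ 2 + p.2 ^ 2) ^ (2 * H)))
        ≤ C / a ^ (4 * H - 2 * ρ - 2) :=
  statement_18_general H ρ hρ1 hρ2
end
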